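/- Let h: (ℂ^n, 0) → (ℂ, 0) be an analytic germ, I ⊆ {1,...,n} nonempty with h|_{ℂ^I} ≢ 0, and let q = (q_1,...,q_n) ∈ ℝ^n with q_i > 0 for i ∈ I and q_i = 0 for i ∉ I. Set Δ := Δ(q, Γ₊(h|_{ℂ^I})). Then there exists a strictly positive vector q' ∈ ℝ^n_{>0} such that Δ = Δ(q', Γ₊(h)). -/

import Mathlib

/-- The Newton polyhedron of a set of exponents: convex hull of `S + ℝ^n_{≥0}`. -/
def NewtonPolyhedron (n : ℕ) (S : Set (Fin n →₀ ℕ)) : Set (Fin n → ℝ) :=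
  convexHull ℝ
    {x | ∃ α ∈ S, ∃ v : Fin n → ℝ, (∀ i, 0 ≤ v i) ∧ x = (fun i => (α i : ℝ)) + v}

/-- The Newton polyhedron taken inside the coordinate subspace `ℝ^I`. -/
def NewtonPolyhedronIn (n : ℕ) (I : Finset (Fin n)) (S : Set (Fin n →₀ ℕ)) :
    Set (Fin n → ℝ) :=
  convexHull ℝ
    {x | ∃ α ∈ S, ∃ v : Fin n → ℝ, (∀ i, 0 ≤ v i) ∧ (∀ i ∉ I, v i = 0) ∧
      x = (fun i => (α i : ℝ)) + v}

/-- `d(q, Γ) := inf {⟨q, x⟩ : x ∈ Γ}`. -/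
noncomputable def dmin (n : ℕ) (q : Fin n → ℝ) (Γ : Set (Fin n → ℝ)) : ℝ :=
  sInf {r : ℝ | ∃ x ∈ Γ, r = ∑ i, q i * x i}

/-- `Δ(q, Γ) := {x ∈ Γ : ⟨q, x⟩ = d(q, Γ)}`. -/
noncomputable def faceOf (n : ℕ) (q : Fin n → ℝ) (Γ : Set (Fin n → ℝ)) :
    Set (Fin n → ℝ) :=
  {x ∈ Γ | ∑ i, q i * x i = dmin n q Γ}

/-
The face of a convex hull cut out by a supporting hyperplane `⟨q, ·⟩ = d` is the convex hull of the
generators lying on it. For a Newton polyhedron, with `q ≥ 0` and `q > 0` in the directions that may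
be added, a generator `α + v` lies on it only if `v = 0`, so both faces are convex hulls of minimal
exponents; a minimal exponent, of weight `d`, exists by Dickson's lemma. Raising the weights outside
`I` from `0` to `|d| + 1` keeps the weight of the exponents supported in `I` and pushes every other exponent above
`d`, so the minimal exponents for `q'` on `Γ₊(h)` are exactly those for `q` on `Γ₊(h|_{ℂ^I})`.
-/

open Set

abbrev exponentPoint {σ : Type*} (α : σ →₀ ℕ) : σ → ℝ := fun i => α i

section LevelSet

variable {E : Type*} [AddCommGroup E] [Module ℝ E] {f : E → ℝ} {G : Set E} {d : ℝ}

lemma le_of_mem_convexHull_of_forall_le (hf : IsLinearMap ℝ f) (hG : ∀ x ∈ G, d ≤ f x)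
    {x : E} (hx : x ∈ convexHull ℝ G) : d ≤ f x :=
  convexHull_min hG (convex_halfSpace_ge hf d) hx

lemma convexHull_inter_level_eq (hf : IsLinearMap ℝ f) (hG : ∀ x ∈ G, d ≤ f x) :
    {x ∈ convexHull ℝ G | f x = d} = convexHull ℝ {x ∈ G | f x = d} := by
  refine Subset.antisymm ?_ <| convexHull_min (fun x hx => ⟨subset_convexHull ℝ G hx.1, hx.2⟩)
    ((convex_convexHull ℝ G).inter (convex_hyperplane hf d))
  set F := convexHull ℝ {x ∈ G | f x = d}
  suffices convexHull ℝ G ⊆ {x | d ≤ f x ∧ (f x = d → x ∈ F)} from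
    fun x ⟨hx, hfx⟩ => (this hx).2 hfx
  refine convexHull_min (fun x hx => ⟨hG x hx, fun hfx => subset_convexHull ℝ _ ⟨hx, hfx⟩⟩) ?_
  rintro x ⟨hdx, hxF⟩ y ⟨hdy, hyF⟩ a b ha hb hab
  have hfz : f (a • x + b • y) = a * f x + b * f y := by
    rw [hf.map_add, hf.map_smul, hf.map_smul, smul_eq_mul, smul_eq_mul]
  have hd : d = a * d + b * d := by rw [← add_mul, hab, one_mul]
  refine ⟨by
    rw [hfz, hd]
    exact add_le_add (mul_le_mul_of_nonneg_left hdx ha) (mul_le_mul_of_nonneg_left hdy hb),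
    fun hz => ?_⟩
  rcases ha.eq_or_lt with rfl | ha
  · obtain rfl : b = 1 := by linarith
    simp only [zero_smul, one_smul, zero_add] at hz ⊢
    exact hyF hz
  rcases hb.eq_or_lt with rfl | hb
  · obtain rfl : a = 1 := by linarith
    simp only [zero_smul, one_smul, add_zero] at hz ⊢
    exact hxF hz
  have hsum : a * (f x - d) + b * (f y - d) = 0 := by
    linear_combination hfz.symm.trans hz - d * hab
  obtain ⟨hx, hy⟩ := (add_eq_zero_iff_of_nonneg (mul_nonneg ha.le (sub_nonneg.mpr hdx))
    (mul_nonneg hb.le (sub_nonneg.mpr hdy))).mp hsum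
  replace hx := sub_eq_zero.mp ((mul_eq_zero.mp hx).resolve_left ha.ne')
  replace hy := sub_eq_zero.mp ((mul_eq_zero.mp hy).resolve_left hb.ne')
  exact convex_convexHull ℝ _ (hxF hx) (hyF hy) ha.le hb.le hab

end LevelSet

section Weights

variable {σ : Type*} [Fintype σ]

lemma eq_zero_of_dotProduct_eq_zero {I : Finset σ} {q : σ → ℝ} (hq : 0 ≤ q) (hqI : ∀ i ∈ I, 0 < q i) {v : σ → ℝ}
    (hv : 0 ≤ v) (hvI : ∀ i ∉ I, v i = 0) (h : q ⬝ᵥ v = 0) : v = 0 := by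
  funext i
  by_cases hi : i ∈ I
  · have hqv := (Finset.sum_eq_zero_iff_of_nonneg fun j _ => mul_nonneg (hq j) (hv j)).mp h i
      (Finset.mem_univ i)
    exact (mul_eq_zero.mp hqv).resolve_left (hqI i hi).ne'
  · exact hvI i hi

lemma exists_forall_dotProduct_exponentPoint_le {q : σ → ℝ} (hq : 0 ≤ q)
    {T : Set (σ →₀ ℕ)} (hT : T.Nonempty) :
    ∃ α ∈ T, ∀ β ∈ T, q ⬝ᵥ exponentPoint α ≤ q ⬝ᵥ exponentPoint β := by
  have hmono : Monotone fun α : σ →₀ ℕ => q ⬝ᵥ exponentPoint α := fun α β hαβ =>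
    dotProduct_le_dotProduct_of_nonneg_left (fun i => Nat.cast_le.mpr (hαβ i)) hq
  have hwf := ((isPWO_of_wellQuasiOrderedLE T).image_of_monotone hmono).isWF
  obtain ⟨α, hα, hαmin⟩ := hwf.min_mem (hT.image _)
  exact ⟨α, hα, fun β hβ => hαmin.trans_le (hwf.min_le _ (mem_image_of_mem _ hβ))⟩

lemma exists_pos_weight_eq_on_and_gt_off (I : Finset σ) {q : σ → ℝ}
    (hqI : ∀ i ∈ I, 0 < q i) (d : ℝ) :
    ∃ q' : σ → ℝ, (∀ i, 0 < q' i) ∧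
      (∀ α : σ →₀ ℕ, (∀ i ∉ I, α i = 0) → q' ⬝ᵥ exponentPoint α = q ⬝ᵥ exponentPoint α) ∧
      (∀ α : σ →₀ ℕ, (∃ i ∉ I, α i ≠ 0) → d < q' ⬝ᵥ exponentPoint α) := by
  classical
  have hM : 0 < |d| + 1 := by positivity
  refine ⟨fun i => if i ∈ I then q i else |d| + 1, fun i => ?_, fun α hα => ?_, ?_⟩
  · dsimp only
    split_ifs with hi
    exacts [hqI i hi, hM]
  · refine Finset.sum_congr rfl fun i _ => ?_
    by_cases hi : i ∈ I <;> simp [hi, hα]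
  · rintro α ⟨j, hj, hαj⟩
    have hαj : (1 : ℝ) ≤ α j := by exact_mod_cast Nat.one_le_iff_ne_zero.mpr hαj
    calc d < (|d| + 1) * 1 := by linarith [le_abs_self d]
      _ ≤ (|d| + 1) * α j := by gcongr
      _ ≤ ∑ i, (if i ∈ I then q i else |d| + 1) * α i := by
        refine (Finset.single_le_sum (f := fun i => (if i ∈ I then q i else |d| + 1) * α i)
          (fun i _ => ?_) (Finset.mem_univ j)).trans_eq' (by simp [hj])
        split_ifs with hi
        exacts [mul_nonneg (hqI i hi).le (Nat.cast_nonneg _), by positivity]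

end Weights

section Face

variable {n : ℕ} {q : Fin n → ℝ} {d : ℝ}

lemma isLinearMap_dotProduct (q : Fin n → ℝ) : IsLinearMap ℝ (q ⬝ᵥ ·) :=
  ⟨dotProduct_add q, fun c x => dotProduct_smul c q x⟩

lemma dmin_eq_of_forall_le {Γ : Set (Fin n → ℝ)} (hΓ : ∀ x ∈ Γ, d ≤ q ⬝ᵥ x) {x₀ : Fin n → ℝ}
    (hx₀ : x₀ ∈ Γ) (hd : q ⬝ᵥ x₀ = d) : dmin n q Γ = d :=
  IsLeast.csInf_eq ⟨⟨x₀, hx₀, hd.symm⟩, by rintro r ⟨x, hx, rfl⟩; exact hΓ x hx⟩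

lemma faceOf_convexHull_eq {G : Set (Fin n → ℝ)} (hG : ∀ x ∈ G, d ≤ q ⬝ᵥ x)
    {x₀ : Fin n → ℝ} (hx₀ : x₀ ∈ G) (hd : q ⬝ᵥ x₀ = d) :
    faceOf n q (convexHull ℝ G) = convexHull ℝ {x ∈ G | q ⬝ᵥ x = d} := by
  have hq := isLinearMap_dotProduct q
  rw [← convexHull_inter_level_eq hq hG, faceOf,
    dmin_eq_of_forall_le (fun x hx => le_of_mem_convexHull_of_forall_le hq hG hx)
      (subset_convexHull ℝ G hx₀) hd]
  rfl

end Face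

section NewtonPolyhedron

variable {n : ℕ} {I : Finset (Fin n)} {S : Set (Fin n →₀ ℕ)} {q : Fin n → ℝ} {d : ℝ}

lemma newtonPolyhedronIn_univ (S : Set (Fin n →₀ ℕ)) :
    NewtonPolyhedronIn n Finset.univ S = NewtonPolyhedron n S := by
  simp [NewtonPolyhedronIn, NewtonPolyhedron]

lemma faceOf_newtonPolyhedronIn (hq : 0 ≤ q) (hqI : ∀ i ∈ I, 0 < q i)
    (hS : ∀ α ∈ S, d ≤ q ⬝ᵥ exponentPoint α) {α₀ : Fin n →₀ ℕ} (hα₀ : α₀ ∈ S)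
    (hd : q ⬝ᵥ exponentPoint α₀ = d) :
    faceOf n q (NewtonPolyhedronIn n I S) =
      convexHull ℝ (exponentPoint '' {α ∈ S | q ⬝ᵥ exponentPoint α = d}) := by
  have hα₀mem : exponentPoint α₀ ∈ {x | ∃ α ∈ S, ∃ v : Fin n → ℝ, (∀ i, 0 ≤ v i) ∧
      (∀ i ∉ I, v i = 0) ∧ x = (fun i => (α i : ℝ)) + v} :=
    ⟨α₀, hα₀, 0, fun _ => le_rfl, fun _ _ => rfl, (add_zero _).symm⟩
  rw [NewtonPolyhedronIn, faceOf_convexHull_eq ?lower hα₀mem hd]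
  case lower =>
    rintro _ ⟨α, hα, v, hv, -, rfl⟩
    have hqv := dotProduct_nonneg_of_nonneg hq hv
    rw [dotProduct_add]
    linarith [hS α hα]
  congr 1
  ext x
  constructor
  · rintro ⟨⟨α, hα, v, hv, hvI, rfl⟩, hx⟩
    rw [dotProduct_add] at hx
    have hqv := dotProduct_nonneg_of_nonneg hq hv
    obtain rfl : v = 0 :=
      eq_zero_of_dotProduct_eq_zero hq hqI hv hvI (by linarith [hS α hα])
    exact ⟨α, ⟨hα, by simpa using hx⟩, (add_zero _).symm⟩
  · rintro ⟨α, ⟨hα, hαd⟩, rfl⟩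
    exact ⟨⟨α, hα, 0, fun _ => le_rfl, fun _ _ => rfl, (add_zero _).symm⟩, hαd⟩

end NewtonPolyhedron

theorem stmt_3_general (n : ℕ) (h : MvPowerSeries (Fin n) ℂ) (I : Finset (Fin n))
    (hres : ∃ α : Fin n →₀ ℕ, MvPowerSeries.coeff α h ≠ 0 ∧ ∀ i ∉ I, α i = 0)
    (q : Fin n → ℝ) (hqpos : ∀ i ∈ I, 0 < q i) (hqzero : ∀ i ∉ I, q i = 0) :
    ∃ q' : Fin n → ℝ, (∀ i, 0 < q' i) ∧
      faceOf n q (NewtonPolyhedronIn n I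
          {α | MvPowerSeries.coeff α h ≠ 0 ∧ ∀ i ∉ I, α i = 0})
        = faceOf n q' (NewtonPolyhedron n {α | MvPowerSeries.coeff α h ≠ 0}) := by
  have hq : 0 ≤ q := fun i => if hi : i ∈ I then (hqpos i hi).le else (hqzero i hi).ge
  set T : Set (Fin n →₀ ℕ) := {α | MvPowerSeries.coeff α h ≠ 0 ∧ ∀ i ∉ I, α i = 0}
  set S : Set (Fin n →₀ ℕ) := {α | MvPowerSeries.coeff α h ≠ 0}
  obtain ⟨α₀, hα₀, hα₀min⟩ := exists_forall_dotProduct_exponentPoint_le hq (T := T) hres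
  obtain ⟨q', hq'pos, hq'eq, hq'gt⟩ :=
    exists_pos_weight_eq_on_and_gt_off I hqpos (q ⬝ᵥ exponentPoint α₀)
  have hq'min : ∀ α ∈ S, q ⬝ᵥ exponentPoint α₀ ≤ q' ⬝ᵥ exponentPoint α := by
    intro α hα
    by_cases hαI : ∀ i ∉ I, α i = 0
    · exact (hα₀min α ⟨hα, hαI⟩).trans_eq (hq'eq α hαI).symm
    · push Not at hαI
      exact (hq'gt α hαI).le
  refine ⟨q', hq'pos, ?_⟩
  rw [faceOf_newtonPolyhedronIn hq hqpos hα₀min hα₀ rfl, ← newtonPolyhedronIn_univ,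
    faceOf_newtonPolyhedronIn (fun i => (hq'pos i).le) (fun i _ => hq'pos i) hq'min hα₀.1
      (hq'eq α₀ hα₀.2)]
  congr 2
  ext α
  constructor
  · rintro ⟨⟨hα, hαI⟩, hαd⟩
    exact ⟨hα, (hq'eq α hαI).trans hαd⟩
  · rintro ⟨hα, hαd⟩
    have hαI : ∀ i ∉ I, α i = 0 := by
      by_contra! hαI
      exact (hq'gt α hαI).ne' hαd
    exact ⟨⟨hα, hαI⟩, (hq'eq α hαI).symm.trans hαd⟩

/-- If `h|_{ℂ^I} ≢ 0` and `q` is strictly positive exactly on `I` and zero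
outside `I`, then the face `Δ(q, Γ₊(h|_{ℂ^I}))` can be realized as a face
`Δ(q', Γ₊(h))` for a strictly positive vector `q'`. -/
theorem stmt_3 (n : ℕ) (h : MvPowerSeries (Fin n) ℂ) (I : Finset (Fin n))
    (hI : I.Nonempty)
    (hres : ∃ α : Fin n →₀ ℕ, MvPowerSeries.coeff α h ≠ 0 ∧ ∀ i ∉ I, α i = 0)
    (q : Fin n → ℝ) (hqpos : ∀ i ∈ I, 0 < q i) (hqzero : ∀ i ∉ I, q i = 0) :
    ∃ q' : Fin n → ℝ, (∀ i, 0 < q' i) ∧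
      faceOf n q (NewtonPolyhedronIn n I
          {α | MvPowerSeries.coeff α h ≠ 0 ∧ ∀ i ∉ I, α i = 0})
        = faceOf n q' (NewtonPolyhedron n {α | MvPowerSeries.coeff α h ≠ 0}) :=
  stmt_3_general n h I hres q hqpos hqzero
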